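/- arXiv:1605.00081 — 4 statements merged into one kernel-verified Lean document; each statement's English description precedes it below -/
import Mathlib

section
/- Let ⊗ be a continuous t-norm on [0,1] and let x ∈ [0,1] be a non-idempotent element. Then there exist idempotent elements e, f ∈ [0,1] with e < x < f such that the closed interval [e,f] is closed under ⊗ and there is a strictly increasing bijection φ : [e,f] → [0,1] with φ(e) = 0, φ(f) = 1 and either φ(a⊗b) = φ(a)·φ(b) for all a, b ∈ [e,f], or φ(a⊗b) = max(0, φ(a)+φ(b)−1) for all a, b ∈ [e,f]; that is, the quantale [e,f] (with tensor the restriction of ⊗ and neutral element f) is isomorphic to [0,1] with either multiplication or the Łukasiewicz tensor. -/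
open unitInterval Set

/-- A continuous t-norm on the unit interval `[0,1]`. -/
structure ContinuousTNorm where
  mul : I → I → I
  comm : ∀ x y, mul x y = mul y x
  assoc : ∀ x y z, mul (mul x y) z = mul x (mul y z)
  mono : ∀ ⦃x₁ x₂ y₁ y₂ : I⦄, x₁ ≤ x₂ → y₁ ≤ y₂ → mul x₁ y₁ ≤ mul x₂ y₂
  continuous : Continuous fun p : I × I => mul p.1 p.2
  one_mul' : ∀ x, mul 1 x = x

/-- The `n`-fold `⊗`-power `xⁿ`. -/
def ContinuousTNorm.pow (T : ContinuousTNorm) (x : I) : ℕ → I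
  | 0 => 1
  | n + 1 => T.mul x (T.pow x n)

/-!
Let `e < x < f` be the idempotents nearest to `x`. With no idempotent strictly between them,
`⊗` is Archimedean on `[e, f]`: the powers `xⁿ` decrease to `e`, and `f` is a unit on `[0, f]`.
Iterated square roots of `x` give dyadic powers `x^(m/2ⁿ)`; their suprema define `x^s` for real
`s ≥ 0`, and `s ↦ x^s` is additive, continuous, maps `[0, ∞)` onto `(e, f]` or `[e, f]`, and is
strictly decreasing as long as it stays above `e`: an equality `x^s = x^(s+d)` would force
`x^s ≤ x^(kd)` for every `k`. If `x^s > e` for all `s`, then `t ↦ x^(-log t)` is an isomorphism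
from `([0,1], ·)` onto `([e,f], ⊗)`; if `x^s` first reaches `e` at `t₀`, then `t ↦ x^((1-t)t₀)`
is one from `([0,1], ⊙)`.
-/

open Filter Topology

namespace ContinuousTNorm

variable (T : ContinuousTNorm)

lemma mul_one (a : I) : T.mul a 1 = a := by rw [T.comm]; exact T.one_mul' a

lemma mul_le_left (a b : I) : T.mul a b ≤ a := by
  simpa [T.mul_one] using T.mono le_rfl (le_one' : b ≤ 1)

lemma mul_le_right (a b : I) : T.mul a b ≤ b := by
  simpa [T.one_mul'] using T.mono (le_one' : a ≤ 1) le_rfl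

lemma continuous_mul_left (a : I) : Continuous fun b => T.mul a b :=
  T.continuous.comp (continuous_const.prodMk continuous_id)

lemma continuous_mul_right (b : I) : Continuous fun a => T.mul a b :=
  T.continuous.comp (continuous_id.prodMk continuous_const)

lemma continuous_mul_self : Continuous fun a => T.mul a a :=
  T.continuous.comp (continuous_id.prodMk continuous_id)

lemma pow_one (a : I) : T.pow a 1 = a := T.mul_one a

lemma pow_add (a : I) (m n : ℕ) : T.pow a (m + n) = T.mul (T.pow a m) (T.pow a n) := by
  induction m with
  | zero => simp [pow, T.one_mul']
  | succ k ih => rw [Nat.add_right_comm, pow, ih, pow, T.assoc]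

lemma pow_mul (a : I) (m n : ℕ) : T.pow a (m * n) = T.pow (T.pow a m) n := by
  induction n with
  | zero => rfl
  | succ k ih => rw [Nat.mul_succ, T.pow_add, ih, pow, T.comm]

lemma pow_antitone (a : I) : Antitone (T.pow a) := by
  intro m n h
  obtain ⟨k, rfl⟩ := Nat.exists_eq_add_of_le h
  rw [T.pow_add]
  exact T.mul_le_left _ _

lemma le_pow_of_idempotent {c a : I} (hc : T.mul c c = c) (h : c ≤ a) (n : ℕ) :
    c ≤ T.pow a n := by
  induction n with
  | zero => exact le_one'
  | succ k ih => exact hc ▸ T.mono h ih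

lemma mul_self_eq_of_tendsto {u : ℕ → I} {L : I} (hu : Tendsto u atTop (𝓝 L))
    (hsq : Tendsto (fun n => T.mul (u n) (u n)) atTop (𝓝 L)) : T.mul L L = L :=
  tendsto_nhds_unique ((T.continuous.tendsto (L, L)).comp (hu.prodMk_nhds hu)) hsq

section Idempotents

variable {T} {e f : I}

lemma mul_eq_of_idempotent_le (he : T.mul e e = e) {b : I} (hb : e ≤ b) : T.mul e b = e :=
  le_antisymm (T.mul_le_left e b) (he.symm.le.trans (T.mono le_rfl hb))

lemma mul_eq_of_le_idempotent (hf : T.mul f f = f) {a : I} (ha : a ≤ f) : T.mul f a = a := by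
  obtain ⟨s, -, hs⟩ :=
    intermediate_value_Icc (zero_le_one' I) (T.continuous_mul_right f).continuousOn
    (show a ∈ Icc (T.mul 0 f) (T.mul 1 f) by
      rw [T.one_mul', le_antisymm (T.mul_le_left 0 f) nonneg']; exact ⟨nonneg', ha⟩)
  rw [← hs, T.comm, T.assoc, hf]

lemma mul_mem_Icc (he : T.mul e e = e) (hf : T.mul f f = f) {a b : I} (ha : a ∈ Icc e f)
    (hb : b ∈ Icc e f) : T.mul a b ∈ Icc e f :=
  ⟨he ▸ T.mono ha.1 hb.1, hf ▸ T.mono ha.2 hb.2⟩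

lemma exists_mul_self_eq (hf : T.mul f f = f) {y : I} (hy : y ≤ f) :
    ∃ z ∈ Icc y f, T.mul z z = y :=
  intermediate_value_Icc hy T.continuous_mul_self.continuousOn
    ⟨T.mul_le_left y y, hf.symm ▸ hy⟩

lemma le_of_forall_le_pow {x y : I} (he : T.mul e e = e) (hex : e ≤ x)
    (hgap : ∀ c, e < c → c ≤ x → T.mul c c ≠ c) (hy : ∀ n, y ≤ T.pow x n) : y ≤ e := by
  set L := ⨅ n, T.pow x n
  have hL : Tendsto (T.pow x) atTop (𝓝 L) :=
    tendsto_atTop_ciInf (T.pow_antitone x) (OrderBot.bddBelow _)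
  have hidem : T.mul L L = L := by
    refine T.mul_self_eq_of_tendsto hL ?_
    simpa only [Function.comp_def, T.pow_add] using
      hL.comp (tendsto_atTop_mono (fun n => Nat.le_add_left n n) tendsto_id)
  have heL : e ≤ L := le_ciInf (T.le_pow_of_idempotent he hex)
  have hLx : L ≤ x := (ciInf_le (OrderBot.bddBelow _) 1).trans_eq (T.pow_one x)
  obtain rfl : L = e := by_contra fun h => hgap L (lt_of_le_of_ne heL (Ne.symm h)) hLx hidem
  exact le_ciInf hy

end Idempotents

structure IsParametrization (e f : I) (op : I → I → I) (Q : I → I) : Prop where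
  strictMono : StrictMono Q
  map_zero : Q 0 = e
  map_one : Q 1 = f
  exists_eq : ∀ y ∈ Icc e f, ∃ t, Q t = y
  map_op : ∀ t t', Q (op t t') = T.mul (Q t) (Q t')

variable {T}

lemma IsParametrization.exists_inv {e f : I} {op : I → I → I} {Q : I → I}
    (hQ : T.IsParametrization e f op Q) (hef : e ≤ f)
    (hcl : ∀ a b : I, a ∈ Icc e f → b ∈ Icc e f → T.mul a b ∈ Icc e f) :
    ∃ φ : Icc e f → I, StrictMono φ ∧ Function.Bijective φ ∧
      φ ⟨e, left_mem_Icc.mpr hef⟩ = 0 ∧ φ ⟨f, right_mem_Icc.mpr hef⟩ = 1 ∧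
      ∀ (a b : I) (ha : a ∈ Icc e f) (hb : b ∈ Icc e f),
        φ ⟨T.mul a b, hcl a b ha hb⟩ = op (φ ⟨a, ha⟩) (φ ⟨b, hb⟩) := by
  have hmem (t : I) : Q t ∈ Icc e f :=
    ⟨hQ.map_zero ▸ hQ.strictMono.monotone nonneg', hQ.map_one ▸ hQ.strictMono.monotone le_one'⟩
  let Φ := StrictMono.orderIsoOfSurjective (codRestrict Q _ hmem) (fun _ _ h => hQ.strictMono h)
    fun y => (hQ.exists_eq y y.2).imp fun _ => Subtype.ext
  have hΦ (t : I) : (Φ t : I) = Q t := rfl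
  refine ⟨Φ.symm, Φ.symm.strictMono, Φ.symm.bijective, ?_, ?_, fun a b ha hb => ?_⟩
  · exact Φ.symm_apply_eq.2 (Subtype.ext hQ.map_zero.symm)
  · exact Φ.symm_apply_eq.2 (Subtype.ext hQ.map_one.symm)
  · refine Φ.symm_apply_eq.2 (Subtype.ext ?_)
    rw [hΦ, hQ.map_op, ← hΦ, ← hΦ, Φ.apply_symm_apply, Φ.apply_symm_apply]

end ContinuousTNorm

def lukasiewicz (t t' : I) : I :=
  ⟨max 0 (t + t' - 1), le_max_left _ _, max_le zero_le_one (by linarith [t.2.2, t'.2.2])⟩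

lemma neg_log_nonneg (t : I) : 0 ≤ -Real.log t := neg_nonneg.2 (Real.log_nonpos t.2.1 t.2.2)

noncomputable def upperDyadic (s : ℝ) (k : ℕ) : ℕ := ⌊s * 2 ^ k⌋₊ + 1

section UpperDyadic

variable {s : ℝ}

lemma lt_upperDyadic_div (k : ℕ) : s < upperDyadic s k / 2 ^ k := by
  rw [lt_div_iff₀ (by positivity)]
  push_cast [upperDyadic]
  exact Nat.lt_floor_add_one _

lemma upperDyadic_div_le (hs : 0 ≤ s) (k : ℕ) :
    (upperDyadic s k : ℝ) / 2 ^ k ≤ s + (1 / 2) ^ k := by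
  have h2 : (0 : ℝ) < 2 ^ k := by positivity
  rw [div_le_iff₀ h2, add_mul, one_div, inv_pow, inv_mul_cancel₀ h2.ne']
  push_cast [upperDyadic]
  linarith [Nat.floor_le (by positivity : 0 ≤ s * 2 ^ k)]

lemma upperDyadic_div_succ_le (hs : 0 ≤ s) (k : ℕ) :
    (upperDyadic s (k + 1) : ℝ) / 2 ^ (k + 1) ≤ upperDyadic s k / 2 ^ k := by
  have hfloor : ⌊s * 2 ^ (k + 1)⌋₊ ≤ 2 * ⌊s * 2 ^ k⌋₊ + 1 := by
    rw [← Nat.lt_succ_iff, Nat.floor_lt (by positivity)]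
    push_cast
    rw [pow_succ]
    nlinarith [Nat.lt_floor_add_one (s * 2 ^ k), pow_pos (two_pos (α := ℝ)) k]
  have hfloor' : (⌊s * 2 ^ (k + 1)⌋₊ : ℝ) ≤ 2 * ⌊s * 2 ^ k⌋₊ + 1 := by exact_mod_cast hfloor
  rw [div_le_div_iff₀ (by positivity) (by positivity)]
  push_cast [upperDyadic]
  generalize ⌊s * 2 ^ (k + 1)⌋₊ = a at hfloor'
  rw [pow_succ]
  nlinarith [mul_le_mul_of_nonneg_right hfloor' (pow_pos (two_pos (α := ℝ)) k).le]

lemma tendsto_upperDyadic_div (hs : 0 ≤ s) :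
    Tendsto (fun k => (upperDyadic s k : ℝ) / 2 ^ k) atTop (𝓝 s) := by
  have h : Tendsto (fun k : ℕ => s + (1 / 2 : ℝ) ^ k) atTop (𝓝 (s + 0)) :=
    tendsto_const_nhds.add (tendsto_pow_atTop_nhds_zero_of_lt_one (by norm_num) (by norm_num))
  rw [add_zero] at h
  exact tendsto_of_tendsto_of_tendsto_of_le_of_le tendsto_const_nhds h
    (fun k => (lt_upperDyadic_div k).le) (upperDyadic_div_le hs)

end UpperDyadic

structure IdempotentGap where
  T : ContinuousTNorm
  x : I
  e : I
  f : I
  mul_self_e : T.mul e e = e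
  mul_self_f : T.mul f f = f
  e_lt_x : e < x
  x_lt_f : x < f
  mul_self_ne : ∀ c : I, e < c → c < f → T.mul c c ≠ c

namespace IdempotentGap

lemma exists_of_mul_self_ne (T : ContinuousTNorm) (x : I) (hx : T.mul x x ≠ x) :
    ∃ S : IdempotentGap, S.T = T ∧ S.x = x := by
  set E := {y : I | T.mul y y = y}
  have hE : IsClosed E := isClosed_eq T.continuous_mul_self continuous_id
  have hemem : sSup (E ∩ Iic x) ∈ E ∩ Iic x :=
    (hE.inter isClosed_Iic).csSup_mem ⟨0, le_antisymm (T.mul_le_right 0 0) nonneg', nonneg'⟩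
      (OrderTop.bddAbove _)
  have hfmem : sInf (E ∩ Ici x) ∈ E ∩ Ici x :=
    (hE.inter isClosed_Ici).csInf_mem ⟨1, T.one_mul' 1, le_one'⟩ (OrderBot.bddBelow _)
  refine ⟨⟨T, x, _, _, hemem.1, hfmem.1, lt_of_le_of_ne hemem.2 fun h => hx (h ▸ hemem.1),
    lt_of_le_of_ne hfmem.2 fun h => hx (h.symm ▸ hfmem.1), fun c hec hcf hcc => ?_⟩, rfl, rfl⟩
  rcases le_or_gt c x with h | h
  · exact hec.not_ge (le_csSup (OrderTop.bddAbove _) ⟨hcc, h⟩)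
  · exact hcf.not_ge (csInf_le (OrderBot.bddBelow _) ⟨hcc, h.le⟩)

variable (S : IdempotentGap)

lemma e_lt_f : S.e < S.f := S.e_lt_x.trans S.x_lt_f

lemma le_e_of_forall_le_pow {y : I} (hy : ∀ n, y ≤ S.T.pow S.x n) : y ≤ S.e :=
  S.T.le_of_forall_le_pow S.mul_self_e S.e_lt_x.le
    (fun c hec hcx => S.mul_self_ne c hec (hcx.trans_lt S.x_lt_f)) hy

noncomputable def sqrt (y : I) : I :=
  if h : y ≤ S.f then (ContinuousTNorm.exists_mul_self_eq S.mul_self_f h).choose else y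

lemma sqrt_spec {y : I} (h : y ≤ S.f) :
    S.sqrt y ∈ Icc y S.f ∧ S.T.mul (S.sqrt y) (S.sqrt y) = y := by
  rw [sqrt, dif_pos h]
  exact (ContinuousTNorm.exists_mul_self_eq S.mul_self_f h).choose_spec

noncomputable def tower : ℕ → I
  | 0 => S.x
  | n + 1 => S.sqrt (tower n)

lemma tower_le_f (n : ℕ) : S.tower n ≤ S.f := by
  induction n with
  | zero => exact S.x_lt_f.le
  | succ k ih => exact (S.sqrt_spec ih).1.2

lemma tower_mul_self (n : ℕ) : S.T.mul (S.tower (n + 1)) (S.tower (n + 1)) = S.tower n :=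
  (S.sqrt_spec (S.tower_le_f n)).2

lemma tower_monotone : Monotone S.tower :=
  monotone_nat_of_le_succ fun n => (S.sqrt_spec (S.tower_le_f n)).1.1

lemma tower_pow (n k : ℕ) : S.T.pow (S.tower (n + k)) (2 ^ k) = S.tower n := by
  induction k with
  | zero => exact S.T.pow_one _
  | succ j ih =>
    rw [pow_succ', S.T.pow_mul, ← ih, ← Nat.add_assoc]
    congr 1
    exact (congrArg (S.T.mul _) (S.T.mul_one _)).trans (S.tower_mul_self _)

lemma e_le_tower (n : ℕ) : S.e ≤ S.tower n :=
  S.e_lt_x.le.trans (S.tower_monotone n.zero_le)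

lemma tendsto_tower : Tendsto S.tower atTop (𝓝 S.f) := by
  set L := ⨆ n, S.tower n
  have hL : Tendsto S.tower atTop (𝓝 L) :=
    tendsto_atTop_ciSup S.tower_monotone (OrderTop.bddAbove _)
  have hidem : S.T.mul L L = L :=
    S.T.mul_self_eq_of_tendsto (hL.comp (tendsto_add_atTop_nat 1))
      (by simpa only [Function.comp_def, S.tower_mul_self] using hL)
  have hxL : S.x ≤ L := le_ciSup (f := S.tower) (OrderTop.bddAbove _) 0
  have hLf : L = S.f := by_contra fun h => S.mul_self_ne L (S.e_lt_x.trans_le hxL)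
    (lt_of_le_of_ne (ciSup_le S.tower_le_f) h) hidem
  rwa [hLf] at hL

/-- `dpow n m = x^(m/2ⁿ)`. -/
noncomputable def dpow (n m : ℕ) : I := S.T.pow (S.tower n) m

lemma dpow_add (n a b : ℕ) : S.dpow n (a + b) = S.T.mul (S.dpow n a) (S.dpow n b) :=
  S.T.pow_add _ a b

lemma dpow_one (n : ℕ) : S.dpow n 1 = S.tower n := S.T.pow_one _

lemma dpow_mul_two_pow (n m k : ℕ) : S.dpow (n + k) (m * 2 ^ k) = S.dpow n m := by
  rw [dpow, dpow, mul_comm, S.T.pow_mul, S.tower_pow]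

lemma dpow_le_dpow {n m n' m' : ℕ} (h : (m : ℝ) / 2 ^ n ≤ m' / 2 ^ n') :
    S.dpow n' m' ≤ S.dpow n m := by
  have hnat : m * 2 ^ n' ≤ m' * 2 ^ n := by
    rw [div_le_div_iff₀ (by positivity) (by positivity)] at h
    exact_mod_cast h
  rw [← S.dpow_mul_two_pow n m n', ← S.dpow_mul_two_pow n' m' n, Nat.add_comm n' n]
  exact S.T.pow_antitone _ hnat

lemma e_le_dpow (n m : ℕ) : S.e ≤ S.dpow n m :=
  S.T.le_pow_of_idempotent S.mul_self_e (S.e_le_tower n) m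

lemma dpow_le_f (n : ℕ) {m : ℕ} (hm : 1 ≤ m) : S.dpow n m ≤ S.f :=
  (S.T.pow_antitone _ hm).trans ((S.dpow_one n).trans_le (S.tower_le_f n))

noncomputable def rpow (s : ℝ) : I := sSup {y | ∃ n m : ℕ, s < m / 2 ^ n ∧ y = S.dpow n m}

lemma dpow_le_rpow {s : ℝ} {n m : ℕ} (h : s < m / 2 ^ n) : S.dpow n m ≤ S.rpow s :=
  le_csSup (OrderTop.bddAbove _) ⟨n, m, h, rfl⟩

lemma rpow_le_of_forall {s : ℝ} {y : I} (h : ∀ n m : ℕ, s < m / 2 ^ n → S.dpow n m ≤ y) :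
    S.rpow s ≤ y := by
  obtain ⟨m, hm⟩ := exists_nat_gt s
  refine csSup_le ⟨_, 0, m, by simpa using hm, rfl⟩ ?_
  rintro _ ⟨n, m, hnm, rfl⟩
  exact h n m hnm

lemma rpow_le_dpow {s : ℝ} {n m : ℕ} (h : (m : ℝ) / 2 ^ n ≤ s) : S.rpow s ≤ S.dpow n m :=
  S.rpow_le_of_forall fun _ _ h' => S.dpow_le_dpow (h.trans h'.le)

lemma rpow_antitone : Antitone S.rpow := fun _ _ h =>
  S.rpow_le_of_forall fun _ _ hnm => S.dpow_le_rpow (h.trans_lt hnm)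

lemma e_le_rpow (s : ℝ) : S.e ≤ S.rpow s := by
  obtain ⟨m, hm⟩ := exists_nat_gt s
  exact (S.e_le_dpow 0 m).trans (S.dpow_le_rpow (by simpa using hm))

lemma rpow_le_f {s : ℝ} (hs : 0 ≤ s) : S.rpow s ≤ S.f :=
  S.rpow_le_of_forall fun n m h => S.dpow_le_f n <|
    Nat.one_le_iff_ne_zero.2 fun hm => by simp [hm] at h; linarith

lemma rpow_natCast_le (n : ℕ) : S.rpow n ≤ S.T.pow S.x n :=
  S.rpow_le_dpow (n := 0) (by simp)

lemma rpow_zero : S.rpow 0 = S.f :=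
  le_antisymm (S.rpow_le_f le_rfl) <| le_of_tendsto' S.tendsto_tower fun k =>
    (S.dpow_one k).symm.trans_le (S.dpow_le_rpow (by positivity))

lemma rpow_dyadic {n m : ℕ} (hm : 1 ≤ m) : S.rpow (m / 2 ^ n) = S.dpow n m := by
  refine le_antisymm (S.rpow_le_dpow le_rfl) ?_
  -- `x^(m/2ⁿ) ⊗ x^(1/2ᵏ)` is a dyadic power beyond `m/2ⁿ`, and tends to `x^(m/2ⁿ) ⊗ f`
  have hk (k : ℕ) : S.T.mul (S.dpow n m) (S.tower k) ≤ S.rpow (m / 2 ^ n) := by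
    have heq : S.T.mul (S.dpow n m) (S.tower k) = S.dpow (n + k) (m * 2 ^ k + 1 * 2 ^ n) := by
      rw [S.dpow_add, S.dpow_mul_two_pow, Nat.add_comm n k, S.dpow_mul_two_pow, S.dpow_one]
    rw [heq]
    refine S.dpow_le_rpow ?_
    rw [div_lt_div_iff₀ (by positivity) (by positivity)]
    push_cast
    rw [pow_add]
    nlinarith [pow_pos (two_pos (α := ℝ)) n, pow_pos (two_pos (α := ℝ)) k]
  have hunit : S.T.mul (S.dpow n m) S.f = S.dpow n m := by
    rw [S.T.comm]; exact ContinuousTNorm.mul_eq_of_le_idempotent S.mul_self_f (S.dpow_le_f n hm)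
  rw [← hunit]
  exact le_of_tendsto' (((S.T.continuous_mul_left _).tendsto S.f).comp S.tendsto_tower) hk

lemma tendsto_dpow_rpow {s : ℝ} (q : ℕ → ℕ) (hlt : ∀ k, s < q k / 2 ^ k)
    (hanti : ∀ k, (q (k + 1) : ℝ) / 2 ^ (k + 1) ≤ q k / 2 ^ k)
    (hq : Tendsto (fun k => (q k : ℝ) / 2 ^ k) atTop (𝓝 s)) :
    Tendsto (fun k => S.dpow k (q k)) atTop (𝓝 (S.rpow s)) := by
  have hsup : ⨆ k, S.dpow k (q k) = S.rpow s := by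
    refine le_antisymm (ciSup_le fun k => S.dpow_le_rpow (hlt k)) ?_
    refine S.rpow_le_of_forall fun n m h => ?_
    obtain ⟨k, hk⟩ := (hq.eventually_lt_const h).exists
    exact (S.dpow_le_dpow hk.le).trans
      (le_ciSup (f := fun k => S.dpow k (q k)) (OrderTop.bddAbove _) k)
  rw [← hsup]
  exact tendsto_atTop_ciSup (monotone_nat_of_le_succ fun k => S.dpow_le_dpow (hanti k))
    (OrderTop.bddAbove _)

lemma rpow_add {s s' : ℝ} (hs : 0 ≤ s) (hs' : 0 ≤ s') :
    S.rpow (s + s') = S.T.mul (S.rpow s) (S.rpow s') := by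
  have hsum : Tendsto (fun k => S.dpow k (upperDyadic s k + upperDyadic s' k)) atTop
      (𝓝 (S.rpow (s + s'))) := by
    refine S.tendsto_dpow_rpow _ (fun k => ?_) (fun k => ?_) ?_
    · push_cast [add_div]
      exact add_lt_add (lt_upperDyadic_div k) (lt_upperDyadic_div k)
    · push_cast [add_div]
      exact add_le_add (upperDyadic_div_succ_le hs k) (upperDyadic_div_succ_le hs' k)
    · simpa [add_div] using (tendsto_upperDyadic_div hs).add (tendsto_upperDyadic_div hs')
  have happrox {r : ℝ} (hr : 0 ≤ r) :=
    S.tendsto_dpow_rpow _ lt_upperDyadic_div (upperDyadic_div_succ_le hr)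
      (tendsto_upperDyadic_div hr)
  refine tendsto_nhds_unique hsum ?_
  simpa only [Function.comp_def, ← S.dpow_add] using
    (S.T.continuous.tendsto (S.rpow s, S.rpow s')).comp ((happrox hs).prodMk_nhds (happrox hs'))

lemma tendsto_rpow_nhdsGE_zero : Tendsto S.rpow (𝓝[≥] 0) (𝓝 S.f) := by
  refine tendsto_order.2 ⟨fun a ha => ?_, fun a ha => ?_⟩
  · obtain ⟨k, hk⟩ := (S.tendsto_tower.eventually (lt_mem_nhds ha)).exists
    filter_upwards [nhdsWithin_le_nhds (gt_mem_nhds (by positivity : (0 : ℝ) < 1 / 2 ^ k))]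
      with d hd
    calc a < S.tower k := hk
      _ = S.rpow (1 / 2 ^ k) := by rw [← S.dpow_one, ← S.rpow_dyadic le_rfl, Nat.cast_one]
      _ ≤ S.rpow d := S.rpow_antitone hd.le
  · filter_upwards [self_mem_nhdsWithin] with d hd using (S.rpow_le_f hd).trans_lt ha

lemma continuousOn_rpow : ContinuousOn S.rpow (Ici 0) := by
  rw [Metric.continuousOn_iff]
  intro b hb ε hε
  obtain ⟨η, hη, hmul⟩ := Metric.uniformContinuous_iff.1
    (CompactSpace.uniformContinuous_of_continuous S.T.continuous) ε hε
  obtain ⟨δ, hδ, hnear⟩ := Metric.tendsto_nhdsWithin_nhds.1 S.tendsto_rpow_nhdsGE_zero η hη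
  -- `x^(u+d) = x^u ⊗ x^d` and `x^u = x^u ⊗ f`, so uniform continuity of `⊗` applies
  have hstep (u d : ℝ) (hu : 0 ≤ u) (hd : 0 ≤ d) (hdδ : d < δ) :
      dist (S.rpow (u + d)) (S.rpow u) < ε := by
    have hunit : S.T.mul (S.rpow u) S.f = S.rpow u := by
      rw [S.T.comm]; exact ContinuousTNorm.mul_eq_of_le_idempotent S.mul_self_f (S.rpow_le_f hu)
    rw [S.rpow_add hu hd]
    nth_rewrite 2 [← hunit]
    refine hmul (a := (S.rpow u, S.rpow d)) (b := (S.rpow u, S.f)) ?_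
    rw [Prod.dist_eq, dist_self]
    exact max_lt hη (hnear hd (by rwa [Real.dist_eq, sub_zero, abs_of_nonneg hd]))
  refine ⟨δ, hδ, fun a ha hab => ?_⟩
  rw [Real.dist_eq] at hab
  rcases le_total a b with h | h
  · have := hstep a (b - a) ha (sub_nonneg.2 h)
      (by rwa [abs_sub_comm, abs_of_nonneg (sub_nonneg.2 h)] at hab)
    rwa [add_sub_cancel, dist_comm] at this
  · have := hstep b (a - b) hb (sub_nonneg.2 h) (by rwa [abs_of_nonneg (sub_nonneg.2 h)] at hab)
    rwa [add_sub_cancel] at this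

lemma rpow_lt_rpow {s s' : ℝ} (hs : 0 ≤ s) (h : s < s') (he : S.e < S.rpow s) :
    S.rpow s' < S.rpow s := by
  refine lt_of_le_of_ne (S.rpow_antitone h.le) fun heq => he.not_ge ?_
  set d := s' - s
  have hd : 0 < d := sub_pos.2 h
  have hfix : S.rpow s = S.T.mul (S.rpow s) (S.rpow d) := by
    rw [← S.rpow_add hs hd.le, add_sub_cancel, heq]
  have hiter (k : ℕ) : S.rpow s = S.T.mul (S.rpow s) (S.rpow (k * d)) := by
    induction k with
    | zero =>
      rw [Nat.cast_zero, zero_mul, S.rpow_zero, S.T.comm]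
      exact (ContinuousTNorm.mul_eq_of_le_idempotent S.mul_self_f (S.rpow_le_f hs)).symm
    | succ k ih =>
      rw [Nat.cast_succ, add_one_mul, S.rpow_add (by positivity) hd.le, ← S.T.assoc, ← ih, ← hfix]
  refine S.le_e_of_forall_le_pow fun n => ?_
  obtain ⟨k, hk⟩ := exists_nat_ge (n / d)
  calc S.rpow s = S.T.mul (S.rpow s) (S.rpow (k * d)) := hiter k
    _ ≤ S.rpow (k * d) := S.T.mul_le_right _ _
    _ ≤ S.rpow n := S.rpow_antitone ((div_le_iff₀ hd).1 hk)
    _ ≤ S.T.pow S.x n := S.rpow_natCast_le n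

lemma exists_rpow_eq {y : I} (hey : S.e < y) (hyf : y ≤ S.f) : ∃ s, 0 ≤ s ∧ S.rpow s = y := by
  obtain ⟨n, hn⟩ : ∃ n : ℕ, S.T.pow S.x n < y := by
    by_contra! h
    exact hey.not_ge (S.le_e_of_forall_le_pow h)
  obtain ⟨s, hs, hsy⟩ := intermediate_value_Icc' (Nat.cast_nonneg n)
    (S.continuousOn_rpow.mono Icc_subset_Ici_self)
    ⟨(S.rpow_natCast_le n).trans hn.le, S.rpow_zero ▸ hyf⟩
  exact ⟨s, hs.1, hsy⟩

lemma rpow_eq_e_of_le {t₀ s : ℝ} (ht₀ : S.rpow t₀ = S.e) (h : t₀ ≤ s) : S.rpow s = S.e :=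
  le_antisymm ((S.rpow_antitone h).trans_eq ht₀) (S.e_le_rpow s)

lemma strict_or_nilpotent : (∀ s, 0 ≤ s → S.e < S.rpow s) ∨
    ∃ t₀, 0 < t₀ ∧ S.rpow t₀ = S.e ∧ ∀ s, 0 ≤ s → s < t₀ → S.e < S.rpow s := by
  refine or_iff_not_imp_left.2 fun h => ?_
  push Not at h
  obtain ⟨s, hs, hse⟩ := h
  set Z := Ici 0 ∩ S.rpow ⁻¹' {S.e}
  have hbdd : BddBelow Z := ⟨0, fun _ h => h.1⟩
  have ht₀ : sInf Z ∈ Z :=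
    (S.continuousOn_rpow.preimage_isClosed_of_isClosed isClosed_Ici isClosed_singleton).csInf_mem
      ⟨s, hs, le_antisymm hse (S.e_le_rpow s)⟩ hbdd
  refine ⟨sInf Z, lt_of_le_of_ne ht₀.1 fun h0 => ?_, ht₀.2, fun s hs hlt => ?_⟩
  · have h : S.rpow 0 = S.e := h0 ▸ ht₀.2
    exact S.e_lt_f.ne' (S.rpow_zero ▸ h)
  · exact lt_of_le_of_ne (S.e_le_rpow s) fun h => hlt.not_ge (csInf_le hbdd ⟨hs, h.symm⟩)

-- `Real.log 0 = 0`, so `t = 0` has to be sent to `e` by hand.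
noncomputable def expParam (t : I) : I := if t = 0 then S.e else S.rpow (-Real.log t)

lemma expParam_zero : S.expParam 0 = S.e := if_pos rfl

lemma e_le_expParam (t : I) : S.e ≤ S.expParam t := by
  unfold expParam
  split_ifs
  exacts [le_rfl, S.e_le_rpow _]

lemma isParametrization_expParam (hpos : ∀ s, 0 ≤ s → S.e < S.rpow s) :
    S.T.IsParametrization S.e S.f (· * ·) S.expParam where
  strictMono t t' h := by
    have ht' : t' ≠ 0 := (nonneg'.trans_lt h).ne'
    simp only [expParam, if_neg ht']
    split_ifs with ht
    · exact hpos _ (neg_log_nonneg t')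
    · exact S.rpow_lt_rpow (neg_log_nonneg t') (neg_lt_neg (Real.log_lt_log
        (lt_of_le_of_ne t.2.1 (Ne.symm (coe_ne_zero.2 ht))) h)) (hpos _ (neg_log_nonneg t'))
  map_zero := S.expParam_zero
  map_one := by simp [expParam, S.rpow_zero]
  exists_eq := by
    rintro y ⟨hey, hyf⟩
    rcases hey.eq_or_lt with rfl | hey
    · exact ⟨0, if_pos rfl⟩
    obtain ⟨s, hs, rfl⟩ := S.exists_rpow_eq hey hyf
    refine ⟨⟨Real.exp (-s), (Real.exp_pos _).le, Real.exp_le_one_iff.2 (by linarith)⟩, ?_⟩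
    rw [expParam, if_neg (coe_ne_zero.1 (Real.exp_pos _).ne')]
    simp
  map_op t t' := by
    by_cases ht : t = 0
    · rw [ht, zero_mul, S.expParam_zero]
      exact (ContinuousTNorm.mul_eq_of_idempotent_le S.mul_self_e (S.e_le_expParam t')).symm
    by_cases ht' : t' = 0
    · rw [ht', mul_zero, S.expParam_zero, S.T.comm]
      exact (ContinuousTNorm.mul_eq_of_idempotent_le S.mul_self_e (S.e_le_expParam t)).symm
    rw [expParam, expParam, expParam, if_neg (mul_ne_zero ht ht'), if_neg ht, if_neg ht',
      ← S.rpow_add (neg_log_nonneg t) (neg_log_nonneg t'), Set.Icc.coe_mul,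
      Real.log_mul (coe_ne_zero.2 ht) (coe_ne_zero.2 ht'), neg_add]

noncomputable def linParam (t₀ : ℝ) (t : I) : I := S.rpow ((1 - t) * t₀)

lemma isParametrization_linParam {t₀ : ℝ} (ht₀ : 0 < t₀) (hPt₀ : S.rpow t₀ = S.e)
    (hpos : ∀ s, 0 ≤ s → s < t₀ → S.e < S.rpow s) :
    S.T.IsParametrization S.e S.f lukasiewicz (S.linParam t₀) where
  strictMono t t' h := by
    have h' : (t : ℝ) < t' := h
    exact S.rpow_lt_rpow (mul_nonneg (by linarith [t'.2.2]) ht₀.le) (by nlinarith)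
      (hpos _ (mul_nonneg (by linarith [t'.2.2]) ht₀.le) (by nlinarith [t.2.1]))
  map_zero := by simp [linParam, hPt₀]
  map_one := by simp [linParam, S.rpow_zero]
  exists_eq := by
    rintro y ⟨hey, hyf⟩
    rcases hey.eq_or_lt with rfl | hey
    · exact ⟨0, by simp [linParam, hPt₀]⟩
    obtain ⟨s, hs, rfl⟩ := S.exists_rpow_eq hey hyf
    have hst : s < t₀ := lt_of_not_ge fun h => hey.ne' (S.rpow_eq_e_of_le hPt₀ h)
    refine ⟨⟨1 - s / t₀, by linarith [(div_lt_one ht₀).2 hst],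
      by linarith [div_nonneg hs ht₀.le]⟩, ?_⟩
    simp only [linParam]
    congr 1
    field_simp
    ring
  map_op t t' := by
    simp only [linParam, lukasiewicz]
    rw [← S.rpow_add (mul_nonneg (by linarith [t.2.2]) ht₀.le)
      (mul_nonneg (by linarith [t'.2.2]) ht₀.le)]
    rcases le_total 0 ((t : ℝ) + t' - 1) with h | h
    · rw [max_eq_right h]
      congr 1
      ring
    · rw [max_eq_left h, sub_zero, one_mul, hPt₀]
      exact (S.rpow_eq_e_of_le hPt₀ (by nlinarith)).symm

end IdempotentGap

/-- For every non-idempotent `x` of a continuous t-norm there are idempotents `e < x < f`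
such that `[e,f]` is closed under `⊗` and, as a quantale with unit `f`, is isomorphic to
`[0,1]` with either multiplication or the Łukasiewicz tensor. -/
theorem tnorm_interval_around_non_idempotent (T : ContinuousTNorm) (x : I)
    (hx : T.mul x x ≠ x) :
    ∃ e f : I, T.mul e e = e ∧ T.mul f f = f ∧
      ∃ (hex : e < x) (hxf : x < f)
        (hcl : ∀ a b : I, a ∈ Set.Icc e f → b ∈ Set.Icc e f → T.mul a b ∈ Set.Icc e f),
        ∃ φ : Set.Icc e f → I, StrictMono φ ∧ Function.Bijective φ ∧
          φ ⟨e, Set.left_mem_Icc.mpr (hex.trans hxf).le⟩ = 0 ∧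
          φ ⟨f, Set.right_mem_Icc.mpr (hex.trans hxf).le⟩ = 1 ∧
          ((∀ (a b : I) (ha : a ∈ Set.Icc e f) (hb : b ∈ Set.Icc e f),
              (φ ⟨T.mul a b, hcl a b ha hb⟩ : ℝ) = (φ ⟨a, ha⟩ : ℝ) * (φ ⟨b, hb⟩ : ℝ)) ∨
            (∀ (a b : I) (ha : a ∈ Set.Icc e f) (hb : b ∈ Set.Icc e f),
              (φ ⟨T.mul a b, hcl a b ha hb⟩ : ℝ) =
                max 0 ((φ ⟨a, ha⟩ : ℝ) + (φ ⟨b, hb⟩ : ℝ) - 1))) := by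
  obtain ⟨S, rfl, rfl⟩ := IdempotentGap.exists_of_mul_self_ne T x hx
  have hcl (a b : I) : a ∈ Icc S.e S.f → b ∈ Icc S.e S.f → S.T.mul a b ∈ Icc S.e S.f :=
    ContinuousTNorm.mul_mem_Icc S.mul_self_e S.mul_self_f
  refine ⟨S.e, S.f, S.mul_self_e, S.mul_self_f, S.e_lt_x, S.x_lt_f, hcl, ?_⟩
  rcases S.strict_or_nilpotent with hstrict | ⟨t₀, ht₀, hPt₀, hpos⟩
  · obtain ⟨φ, hmono, hbij, h0, h1, hmul⟩ :=
      (S.isParametrization_expParam hstrict).exists_inv S.e_lt_f.le hcl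
    exact ⟨φ, hmono, hbij, h0, h1, Or.inl fun a b ha hb => congrArg Subtype.val (hmul a b ha hb)⟩
  · obtain ⟨φ, hmono, hbij, h0, h1, hluk⟩ :=
      (S.isParametrization_linParam ht₀ hPt₀ hpos).exists_inv S.e_lt_f.le hcl
    exact ⟨φ, hmono, hbij, h0, h1, Or.inr fun a b ha hb => congrArg Subtype.val (hluk a b ha hb)⟩
end

section
/- Let (⊗ᵢ)_{i∈I} be a family of continuous t-norms on [0,1], and let (aᵢ)_{i∈I}, (bᵢ)_{i∈I} be families of elements of [0,1] with aᵢ < bᵢ for all i such that the open intervals (aᵢ,bᵢ) are pairwise disjoint. Define x⊗y = aᵢ + (bᵢ−aᵢ)·( ((x−aᵢ)/(bᵢ−aᵢ)) ⊗ᵢ ((y−aᵢ)/(bᵢ−aᵢ)) ) if x, y ∈ [aᵢ,bᵢ] for some i ∈ I, and x⊗y = min(x,y) otherwise. Then ⊗ is a well-defined continuous t-norm on [0,1], and its residuation is given by hom(x,y) = 1 if x ≤ y; hom(x,y) = aᵢ + (bᵢ−aᵢ)·homᵢ((x−aᵢ)/(bᵢ−aᵢ), (y−aᵢ)/(bᵢ−aᵢ))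 if x, y ∈ [aᵢ,bᵢ]; and hom(x,y) = y otherwise (where homᵢ is the residuation of ⊗ᵢ). -/
open unitInterval Set

instance : Fact ((0:ℝ) ≤ 1) := ⟨zero_le_one⟩

/-- The residuation `hom(u,v) = sup {w | u ⊗ w ≤ v}` of a t-norm. -/
noncomputable def ContinuousTNorm.hom (T : ContinuousTNorm) (u v : I) : I :=
  sSup {w : I | T.mul u w ≤ v}

/-- Clamping a real number into `[0,1]`. -/
noncomputable def clamp (r : ℝ) : I := Set.projIcc 0 1 zero_le_one r

/-! On a block `[aᵢ, bᵢ]` the operation `T` is `tᵢ` transported along the increasing affine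
bijection `[0,1] ≃ [aᵢ, bᵢ]`, so the t-norm laws hold inside each block. Because the open blocks
are disjoint, a closed block meets another one at most in an endpoint, and at an endpoint the block
formula agrees with `min`; the algebraic laws and the residuation then follow by locating the
arguments relative to the blocks. For continuity, each section `T x` is monotone with range the
interval `[0, x]` (by the intermediate value theorem for `tᵢ` inside a block), hence continuous,
and a function of two variables that is monotone and continuous in each variable separately is
jointly continuous. -/

open Filter Topology

section MonotoneContinuity

theorem Monotone.continuous_of_ordConnected_range {α β : Type*}
    [LinearOrder α] [TopologicalSpace α] [OrderTopology α]
    [LinearOrder β] [TopologicalSpace β] [OrderTopology β] [DenselyOrdered β] {f : α → β}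
    (hf : Monotone f) (hr : (range f).OrdConnected) : Continuous f :=
  continuous_subtype_val.comp <|
    Monotone.continuous_of_surjective (fun _ _ h => hf h) rangeFactorization_surjective

variable {α β : Type*}
  [LinearOrder α] [TopologicalSpace α] [OrderTopology α]
  [LinearOrder β] [TopologicalSpace β] [OrderTopology β]

theorem eventually_mem_of_monotone_of_continuous {γ : Type*} [Preorder γ] [TopologicalSpace γ]
    {f : α → β → γ}
    (hmono : ∀ ⦃x₁ x₂ y₁ y₂⦄, x₁ ≤ x₂ → y₁ ≤ y₂ → f x₁ y₁ ≤ f x₂ y₂)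
    (hcont₁ : ∀ y, Continuous (f · y)) (hcont₂ : ∀ x, Continuous (f x))
    {V : Set γ} (hV : IsOpen V) (hV' : V.OrdConnected) {x₀ : α} {y₀ : β} (h : f x₀ y₀ ∈ V) :
    ∀ᶠ p in 𝓝 (x₀, y₀), f p.1 p.2 ∈ V := by
  obtain ⟨b, c, hx₀, hbc, hs⟩ := exists_Icc_mem_subset_of_mem_nhds
    ((hcont₁ y₀).continuousAt.preimage_mem_nhds (hV.mem_nhds h))
  have hb : f b y₀ ∈ V := hs (left_mem_Icc.2 (hx₀.1.trans hx₀.2))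
  have hc : f c y₀ ∈ V := hs (right_mem_Icc.2 (hx₀.1.trans hx₀.2))
  obtain ⟨b', c', hy₀, hbc', hs'⟩ := exists_Icc_mem_subset_of_mem_nhds
    (inter_mem ((hcont₂ b).continuousAt.preimage_mem_nhds (hV.mem_nhds hb))
      ((hcont₂ c).continuousAt.preimage_mem_nhds (hV.mem_nhds hc)))
  filter_upwards [prod_mem_nhds hbc hbc'] with p ⟨hp₁, hp₂⟩
  exact hV'.out (hs' (left_mem_Icc.2 (hy₀.1.trans hy₀.2))).1
    (hs' (right_mem_Icc.2 (hy₀.1.trans hy₀.2))).2 ⟨hmono hp₁.1 hp₂.1, hmono hp₁.2 hp₂.2⟩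

theorem continuous_of_monotone_of_continuous {γ : Type*}
    [LinearOrder γ] [TopologicalSpace γ] [OrderTopology γ] {f : α → β → γ}
    (hmono : ∀ ⦃x₁ x₂ y₁ y₂⦄, x₁ ≤ x₂ → y₁ ≤ y₂ → f x₁ y₁ ≤ f x₂ y₂)
    (hcont₁ : ∀ y, Continuous (f · y)) (hcont₂ : ∀ x, Continuous (f x)) :
    Continuous fun p : α × β => f p.1 p.2 :=
  continuous_iff_continuousAt.2 fun _ => tendsto_order.2
    ⟨fun _ hl => eventually_mem_of_monotone_of_continuous hmono hcont₁ hcont₂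
        isOpen_Ioi ordConnected_Ioi hl,
      fun _ hu => eventually_mem_of_monotone_of_continuous hmono hcont₁ hcont₂
        isOpen_Iio ordConnected_Iio hu⟩

end MonotoneContinuity

namespace ContinuousTNorm

variable (t : ContinuousTNorm)

lemma mul_one_s5 (x : I) : t.mul x 1 = x := (t.comm x 1).trans (t.one_mul' x)

lemma mul_le_right_s5 (x y : I) : t.mul x y ≤ y :=
  (t.mono le_one' le_rfl).trans_eq (t.one_mul' y)

lemma mul_le_left_s5 (x y : I) : t.mul x y ≤ x := t.comm x y ▸ t.mul_le_right_s5 y x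

lemma zero_mul (x : I) : t.mul 0 x = 0 := le_antisymm (t.mul_le_left_s5 0 x) nonneg'

lemma mul_zero (x : I) : t.mul x 0 = 0 := le_antisymm (t.mul_le_right_s5 x 0) nonneg'

lemma continuous_mul_left_s5 (x : I) : Continuous (t.mul x) :=
  t.continuous.comp (Continuous.prodMk_right x)

lemma Iic_subset_range_mul_left (x : I) : Iic x ⊆ range (t.mul x) := fun _ hv => by
  have := intermediate_value_univ 0 1 (t.continuous_mul_left_s5 x)
  rw [t.mul_zero, t.mul_one_s5] at this
  exact this ⟨nonneg', hv⟩

lemma mul_hom_le (u v : I) : t.mul u (t.hom u v) ≤ v :=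
  (isClosed_Iic.preimage (t.continuous_mul_left_s5 u)).sSup_mem ⟨0, by simp [t.mul_zero]⟩

lemma le_hom_iff {u v w : I} : w ≤ t.hom u v ↔ t.mul u w ≤ v :=
  ⟨fun h => (t.mono le_rfl h).trans (t.mul_hom_le u v), fun h => le_sSup h⟩

end ContinuousTNorm

lemma coe_clamp {r : ℝ} (hr : r ∈ Icc (0 : ℝ) 1) : (clamp r : ℝ) = r := by
  simp [clamp, Set.projIcc_of_mem _ hr]

namespace unitInterval

/-- The affine maps `[a, b] → [0, 1]` and `[0, 1] → [a, b]`, clamped to make them total; they are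
mutually inverse when `a < b`. -/
noncomputable def toUnit (a b x : I) : I := clamp (((x : ℝ) - a) / (b - a))

noncomputable def ofUnit (a b u : I) : I := clamp (a + (b - a) * u)

variable {a b : I}

lemma coe_ofUnit (h : a ≤ b) (u : I) : (ofUnit a b u : ℝ) = a + (b - a) * u := by
  have hab : (a : ℝ) ≤ b := h
  apply coe_clamp
  constructor <;> nlinarith [a.2.1, b.2.2, u.2.1, u.2.2]

lemma ofUnit_mem_Icc (h : a ≤ b) (u : I) : ofUnit a b u ∈ Icc a b := by
  have hab : (a : ℝ) ≤ b := h
  simp only [mem_Icc, ← Subtype.coe_le_coe, coe_ofUnit h]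
  constructor <;> nlinarith [u.2.1, u.2.2]

lemma ofUnit_mono (h : a ≤ b) : Monotone (ofUnit a b) := fun u v huv => by
  have hab : (a : ℝ) ≤ b := h
  have huv : (u : ℝ) ≤ v := huv
  rw [← Subtype.coe_le_coe, coe_ofUnit h, coe_ofUnit h]
  nlinarith

lemma toUnit_mono (h : a ≤ b) : Monotone (toUnit a b) := fun _ _ hxy =>
  Set.monotone_projIcc zero_le_one <|
    div_le_div_of_nonneg_right (sub_le_sub_right (Subtype.coe_le_coe.2 hxy) _)
      (sub_nonneg.2 (Subtype.coe_le_coe.2 h))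

lemma toUnit_ofUnit (h : a < b) (u : I) : toUnit a b (ofUnit a b u) = u := by
  have hab : (0 : ℝ) < b - a := sub_pos.2 h
  apply Subtype.ext
  rw [toUnit, coe_ofUnit h.le, add_sub_cancel_left, mul_div_cancel_left₀ _ hab.ne']
  exact coe_clamp u.2

lemma ofUnit_toUnit (h : a < b) {x : I} (hx : x ∈ Icc a b) : ofUnit a b (toUnit a b x) = x := by
  have hab : (0 : ℝ) < b - a := sub_pos.2 h
  have hx₁ : (a : ℝ) ≤ x := hx.1
  have hx₂ : (x : ℝ) ≤ b := hx.2
  have hmem : ((x : ℝ) - a) / (b - a) ∈ Icc (0 : ℝ) 1 :=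
    ⟨div_nonneg (by linarith) hab.le, (div_le_one hab).2 (by linarith)⟩
  apply Subtype.ext
  rw [coe_ofUnit h.le, toUnit, coe_clamp hmem, mul_div_cancel₀ _ hab.ne']
  ring

lemma ofUnit_zero : ofUnit a b 0 = a := Subtype.ext (by simp [ofUnit, coe_clamp a.2])

lemma ofUnit_one : ofUnit a b 1 = b := Subtype.ext (by simp [ofUnit, coe_clamp b.2])

lemma toUnit_left (h : a < b) : toUnit a b a = 0 := by
  simpa only [ofUnit_zero] using toUnit_ofUnit h 0

lemma toUnit_right (h : a < b) : toUnit a b b = 1 := by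
  simpa only [ofUnit_one] using toUnit_ofUnit h 1

end unitInterval

structure IsOrdinalSum {ι : Type*} (t : ι → ContinuousTNorm) (a b : ι → I) (T : I → I → I) :
    Prop where
  lt : ∀ i, a i < b i
  disjoint : ∀ i j, i ≠ j → Ioo (a i) (b i) ∩ Ioo (a j) (b j) = ∅
  coe_block : ∀ i x y, x ∈ Icc (a i) (b i) → y ∈ Icc (a i) (b i) →
    (T x y : ℝ) = a i + (b i - a i) * ((t i).mul (toUnit (a i) (b i) x) (toUnit (a i) (b i) y))
  off_block : ∀ x y, (¬ ∃ i, x ∈ Icc (a i) (b i) ∧ y ∈ Icc (a i) (b i)) → T x y = min x y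

namespace IsOrdinalSum

variable {ι : Type*} {t : ι → ContinuousTNorm} {a b : ι → I} {T : I → I → I}
  (h : IsOrdinalSum t a b T)
include h

lemma mul_eq_ofUnit {i : ι} {x y : I} (hx : x ∈ Icc (a i) (b i)) (hy : y ∈ Icc (a i) (b i)) :
    T x y = ofUnit (a i) (b i) ((t i).mul (toUnit (a i) (b i) x) (toUnit (a i) (b i) y)) :=
  Subtype.ext ((h.coe_block i x y hx hy).trans (coe_ofUnit (h.lt i).le _).symm)

lemma mul_mem_Icc {i : ι} {x y : I} (hx : x ∈ Icc (a i) (b i))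
    (hy : y ∈ Icc (a i) (b i)) : T x y ∈ Icc (a i) (b i) :=
  h.mul_eq_ofUnit hx hy ▸ ofUnit_mem_Icc (h.lt i).le _

lemma toUnit_mul {i : ι} {x y : I} (hx : x ∈ Icc (a i) (b i)) (hy : y ∈ Icc (a i) (b i)) :
    toUnit (a i) (b i) (T x y) = (t i).mul (toUnit (a i) (b i) x) (toUnit (a i) (b i) y) := by
  rw [h.mul_eq_ofUnit hx hy, toUnit_ofUnit (h.lt i)]

lemma comm (x y : I) : T x y = T y x := by
  by_cases hb : ∃ i, x ∈ Icc (a i) (b i) ∧ y ∈ Icc (a i) (b i)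
  · obtain ⟨i, hx, hy⟩ := hb
    rw [h.mul_eq_ofUnit hx hy, h.mul_eq_ofUnit hy hx, (t i).comm]
  · rw [h.off_block x y hb, h.off_block y x fun ⟨i, hy, hx⟩ => hb ⟨i, hx, hy⟩, min_comm]

lemma mul_le_left_s5 (x y : I) : T x y ≤ x := by
  by_cases hb : ∃ i, x ∈ Icc (a i) (b i) ∧ y ∈ Icc (a i) (b i)
  · obtain ⟨i, hx, hy⟩ := hb
    calc T x y = ofUnit (a i) (b i) ((t i).mul (toUnit (a i) (b i) x) (toUnit (a i) (b i) y)) :=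
          h.mul_eq_ofUnit hx hy
      _ ≤ ofUnit (a i) (b i) (toUnit (a i) (b i) x) :=
          ofUnit_mono (h.lt i).le ((t i).mul_le_left_s5 _ _)
      _ = x := ofUnit_toUnit (h.lt i) hx
  · exact (h.off_block x y hb).trans_le (min_le_left x y)

lemma mul_le_right_s5 (x y : I) : T x y ≤ y := h.comm y x ▸ h.mul_le_left_s5 y x

lemma lower_mul {i : ι} {x : I} (hx : x ∈ Icc (a i) (b i)) : T (a i) x = a i := by
  rw [h.mul_eq_ofUnit (left_mem_Icc.2 (h.lt i).le) hx, toUnit_left (h.lt i), (t i).zero_mul,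
    ofUnit_zero]

lemma upper_mul {i : ι} {x : I} (hx : x ∈ Icc (a i) (b i)) : T (b i) x = x := by
  rw [h.mul_eq_ofUnit (right_mem_Icc.2 (h.lt i).le) hx, toUnit_right (h.lt i), (t i).one_mul',
    ofUnit_toUnit (h.lt i) hx]

lemma one_mul (x : I) : T 1 x = x := by
  by_cases hb : ∃ i, (1 : I) ∈ Icc (a i) (b i) ∧ x ∈ Icc (a i) (b i)
  · obtain ⟨i, h₁, hx⟩ := hb
    rw [← le_antisymm le_one' h₁.2, h.upper_mul hx]
  · rw [h.off_block 1 x hb, min_eq_right le_one']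

lemma eq_of_mem_Ioo_of_mem_Icc {i j : ι} {x : I} (hi : x ∈ Ioo (a i) (b i))
    (hj : x ∈ Icc (a j) (b j)) : i = j := by
  by_contra hij
  rw [← closure_Ioo (h.lt j).ne] at hj
  obtain ⟨z, hzi, hzj⟩ := mem_closure_iff.1 hj _ isOpen_Ioo hi
  exact eq_empty_iff_forall_notMem.1 (h.disjoint i j hij) z ⟨hzi, hzj⟩

lemma mul_eq_min_of_mem_Icc_of_notMem {i : ι} {x y : I} (hx : x ∈ Icc (a i) (b i))
    (hy : y ∉ Icc (a i) (b i)) : T x y = min x y := by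
  by_cases hb : ∃ j, x ∈ Icc (a j) (b j) ∧ y ∈ Icc (a j) (b j)
  · obtain ⟨j, hxj, hyj⟩ := hb
    have hx' : x ∉ Ioo (a j) (b j) := fun hx' => hy (h.eq_of_mem_Ioo_of_mem_Icc hx' hx ▸ hyj)
    have hend : x ∈ ({a j, b j} : Set I) := Icc_sdiff_Ioo_same (h.lt j).le ▸ ⟨hxj, hx'⟩
    rcases hend with rfl | rfl
    · rw [h.lower_mul hyj, min_eq_left hyj.1]
    · rw [h.upper_mul hyj, min_eq_right hyj.2]
  · exact h.off_block x y hb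

lemma mono_left {x₁ x₂ : I} (hx : x₁ ≤ x₂) (y : I) : T x₁ y ≤ T x₂ y := by
  by_cases h₁ : ∃ i, x₁ ∈ Icc (a i) (b i) ∧ y ∈ Icc (a i) (b i)
  · obtain ⟨i, hx₁, hy⟩ := h₁
    by_cases hx₂ : x₂ ∈ Icc (a i) (b i)
    · rw [h.mul_eq_ofUnit hx₁ hy, h.mul_eq_ofUnit hx₂ hy]
      exact ofUnit_mono (h.lt i).le ((t i).mono (toUnit_mono (h.lt i).le hx) le_rfl)
    · rw [h.comm x₂, h.mul_eq_min_of_mem_Icc_of_notMem hy hx₂]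
      exact le_min (h.mul_le_right_s5 x₁ y) ((h.mul_le_left_s5 x₁ y).trans hx)
  · rw [h.off_block x₁ y h₁]
    by_cases h₂ : ∃ j, x₂ ∈ Icc (a j) (b j) ∧ y ∈ Icc (a j) (b j)
    · obtain ⟨j, hx₂, hy⟩ := h₂
      have hx₁ : x₁ < a j := not_le.1 fun hax => h₁ ⟨j, ⟨hax, hx.trans hx₂.2⟩, hy⟩
      exact (min_le_left _ _).trans (hx₁.le.trans (h.mul_mem_Icc hx₂ hy).1)
    · rw [h.off_block x₂ y h₂]
      exact min_le_min_right y hx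

lemma mono ⦃x₁ x₂ y₁ y₂ : I⦄ (hx : x₁ ≤ x₂) (hy : y₁ ≤ y₂) : T x₁ y₁ ≤ T x₂ y₂ :=
  calc T x₁ y₁ ≤ T x₂ y₁ := h.mono_left hx y₁
    _ = T y₁ x₂ := h.comm _ _
    _ ≤ T y₂ x₂ := h.mono_left hy x₂
    _ = T x₂ y₂ := h.comm _ _

lemma assoc_of_mem_Icc_of_notMem {i : ι} {x y z : I} (hx : x ∈ Icc (a i) (b i))
    (hy : y ∈ Icc (a i) (b i)) (hz : z ∉ Icc (a i) (b i)) : T (T x y) z = T x (T y z) := by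
  have hxy := h.mul_mem_Icc hx hy
  rw [h.mul_eq_min_of_mem_Icc_of_notMem hxy hz, h.mul_eq_min_of_mem_Icc_of_notMem hy hz]
  rcases not_and_or.1 hz with hza | hbz
  · have hza := (not_le.1 hza).le
    rw [min_eq_right (hza.trans hxy.1), min_eq_right (hza.trans hy.1),
      h.mul_eq_min_of_mem_Icc_of_notMem hx hz, min_eq_right (hza.trans hx.1)]
  · have hbz := (not_le.1 hbz).le
    rw [min_eq_left (hxy.2.trans hbz), min_eq_left (hy.2.trans hbz)]

lemma assoc_of_not_block {x y z : I} (hxy : ¬ ∃ i, x ∈ Icc (a i) (b i) ∧ y ∈ Icc (a i) (b i)) :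
    T (T x y) z = T x (T y z) := by
  rw [h.off_block x y hxy]
  rcases le_total y x with hyx | hxy'
  · rw [min_eq_right hyx, h.off_block x (T y z), min_eq_right ((h.mul_le_left_s5 y z).trans hyx)]
    rintro ⟨k, hxk, hwk⟩
    exact hxy ⟨k, hxk, hwk.1.trans (h.mul_le_left_s5 y z), hyx.trans hxk.2⟩
  rw [min_eq_left hxy']
  by_cases hyz : ∃ j, y ∈ Icc (a j) (b j) ∧ z ∈ Icc (a j) (b j)
  · obtain ⟨j, hy, hz⟩ := hyz
    have hx : x ∉ Icc (a j) (b j) := fun hx => hxy ⟨j, hx, hy⟩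
    have hxa : x ≤ a j := (not_le.1 fun hax => hx ⟨hax, hxy'.trans hy.2⟩).le
    have hyz := h.mul_mem_Icc hy hz
    rw [h.comm x, h.comm x, h.mul_eq_min_of_mem_Icc_of_notMem hz hx,
      h.mul_eq_min_of_mem_Icc_of_notMem hyz hx, min_eq_right (hxa.trans hz.1),
      min_eq_right (hxa.trans hyz.1)]
  rw [h.off_block y z hyz]
  rcases le_total z y with hzy | hyz'
  · rw [min_eq_right hzy]
  · rw [min_eq_left hyz', h.off_block x y hxy, min_eq_left hxy', h.off_block x z,
      min_eq_left (hxy'.trans hyz')]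
    rintro ⟨k, hxk, hzk⟩
    exact hxy ⟨k, hxk, hxk.1.trans hxy', hyz'.trans hzk.2⟩

lemma assoc (x y z : I) : T (T x y) z = T x (T y z) := by
  by_cases hxy : ∃ i, x ∈ Icc (a i) (b i) ∧ y ∈ Icc (a i) (b i)
  · obtain ⟨i, hx, hy⟩ := hxy
    by_cases hz : z ∈ Icc (a i) (b i)
    · rw [h.mul_eq_ofUnit (h.mul_mem_Icc hx hy) hz, h.mul_eq_ofUnit hx (h.mul_mem_Icc hy hz),
        h.toUnit_mul hx hy, h.toUnit_mul hy hz, (t i).assoc]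
    · exact h.assoc_of_mem_Icc_of_notMem hx hy hz
  · exact h.assoc_of_not_block hxy

lemma range_mul_left (x : I) : range (T x) = Iic x := by
  refine subset_antisymm (range_subset_iff.2 (h.mul_le_left_s5 x)) fun v hv => ?_
  by_cases hb : ∃ i, x ∈ Icc (a i) (b i) ∧ a i ≤ v
  · obtain ⟨i, hx, hav⟩ := hb
    have hv' : v ∈ Icc (a i) (b i) := ⟨hav, le_trans hv hx.2⟩
    obtain ⟨u, hu⟩ := (t i).Iic_subset_range_mul_left _ (toUnit_mono (h.lt i).le hv)
    refine ⟨ofUnit (a i) (b i) u, ?_⟩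
    rw [h.mul_eq_ofUnit hx (ofUnit_mem_Icc (h.lt i).le u), toUnit_ofUnit (h.lt i), hu,
      ofUnit_toUnit (h.lt i) hv']
  · refine ⟨v, (h.off_block x v ?_).trans (min_eq_right hv)⟩
    rintro ⟨i, hx, hv⟩
    exact hb ⟨i, hx, hv.1⟩

lemma continuous_mul_left_s5 (x : I) : Continuous (T x) :=
  Monotone.continuous_of_ordConnected_range (fun _ _ hw => h.mono le_rfl hw)
    (h.range_mul_left x ▸ ordConnected_Iic)

lemma continuous : Continuous fun p : I × I => T p.1 p.2 :=
  continuous_of_monotone_of_continuous h.mono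
    (fun y => (h.continuous_mul_left_s5 y).congr fun w => h.comm y w) h.continuous_mul_left_s5

lemma sSup_eq_one {x y : I} (hxy : x ≤ y) : sSup {w | T x w ≤ y} = 1 :=
  le_antisymm le_one' (le_sSup (((h.comm x 1).trans (h.one_mul x)).le.trans hxy))

lemma sSup_eq_right {x y : I} (hyx : y < x)
    (hb : ¬ ∃ i, x ∈ Icc (a i) (b i) ∧ y ∈ Icc (a i) (b i)) : sSup {w | T x w ≤ y} = y := by
  refine IsGreatest.csSup_eq ⟨h.mul_le_right_s5 x y, fun w (hw : T x w ≤ y) => ?_⟩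
  by_contra! hyw
  by_cases hk : ∃ k, x ∈ Icc (a k) (b k) ∧ w ∈ Icc (a k) (b k)
  · obtain ⟨k, hx, hw'⟩ := hk
    exact hb ⟨k, hx, (h.mul_mem_Icc hx hw').1.trans hw, hyx.le.trans hx.2⟩
  · rw [h.off_block x w hk] at hw
    exact (lt_min hyx hyw).not_ge hw

lemma sSup_eq_ofUnit {i : ι} {x y : I} (hyx : y < x) (hx : x ∈ Icc (a i) (b i))
    (hy : y ∈ Icc (a i) (b i)) : sSup {w | T x w ≤ y} =
      ofUnit (a i) (b i) ((t i).hom (toUnit (a i) (b i) x) (toUnit (a i) (b i) y)) := by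
  have hab := h.lt i
  have hc := ofUnit_mem_Icc hab.le ((t i).hom (toUnit (a i) (b i) x) (toUnit (a i) (b i) y))
  refine IsGreatest.csSup_eq ⟨?_, fun w (hw : T x w ≤ y) => ?_⟩
  · show T x _ ≤ y
    rw [h.mul_eq_ofUnit hx hc, toUnit_ofUnit hab]
    exact (ofUnit_mono hab.le ((t i).mul_hom_le _ _)).trans_eq (ofUnit_toUnit hab hy)
  by_cases hw' : w ∈ Icc (a i) (b i)
  · rw [← ofUnit_toUnit hab hw']
    refine ofUnit_mono hab.le ((t i).le_hom_iff.2 ?_)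
    rw [← h.toUnit_mul hx hw']
    exact toUnit_mono hab.le hw
  obtain hwa | haw := lt_or_ge w (a i)
  · exact hwa.le.trans hc.1
  · have hbw : b i ≤ w := (not_le.1 fun hwb => hw' ⟨haw, hwb⟩).le
    rw [h.mul_eq_min_of_mem_Icc_of_notMem hx hw', min_eq_left (hx.2.trans hbw)] at hw
    exact absurd hw hyx.not_ge

end IsOrdinalSum

/-- Continuous t-norms can be defined piecewise from a family of continuous t-norms
rescaled to intervals `[aᵢ, bᵢ]` whose interiors are pairwise disjoint, using `min`
outside the blocks; the residuation of the resulting t-norm is computed casewise. -/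
theorem tnorm_ordinal_sum {ι : Type*} (t : ι → ContinuousTNorm) (a b : ι → I)
    (hab : ∀ i, a i < b i)
    (hdisj : ∀ i j, i ≠ j → Set.Ioo (a i) (b i) ∩ Set.Ioo (a j) (b j) = ∅)
    (T : I → I → I)
    (hdef₁ : ∀ (i : ι) (x y : I), x ∈ Set.Icc (a i) (b i) → y ∈ Set.Icc (a i) (b i) →
      (T x y : ℝ) = (a i : ℝ) + ((b i : ℝ) - (a i : ℝ)) *
        ((t i).mul (clamp (((x : ℝ) - (a i : ℝ)) / ((b i : ℝ) - (a i : ℝ))))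
                   (clamp (((y : ℝ) - (a i : ℝ)) / ((b i : ℝ) - (a i : ℝ)))) : ℝ))
    (hdef₂ : ∀ x y : I, (¬ ∃ i : ι, x ∈ Set.Icc (a i) (b i) ∧ y ∈ Set.Icc (a i) (b i)) →
      T x y = min x y) :
    (∀ x y, T x y = T y x) ∧
    (∀ x y z, T (T x y) z = T x (T y z)) ∧
    (∀ x₁ x₂ y₁ y₂ : I, x₁ ≤ x₂ → y₁ ≤ y₂ → T x₁ y₁ ≤ T x₂ y₂) ∧
    Continuous (fun p : I × I => T p.1 p.2) ∧
    (∀ x, T 1 x = x) ∧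
    (∀ x y : I,
      (x ≤ y → sSup {w : I | T x w ≤ y} = 1) ∧
      (∀ i : ι, ¬ x ≤ y → x ∈ Set.Icc (a i) (b i) → y ∈ Set.Icc (a i) (b i) →
        ((sSup {w : I | T x w ≤ y} : I) : ℝ) = (a i : ℝ) + ((b i : ℝ) - (a i : ℝ)) *
          ((t i).hom (clamp (((x : ℝ) - (a i : ℝ)) / ((b i : ℝ) - (a i : ℝ))))
                     (clamp (((y : ℝ) - (a i : ℝ)) / ((b i : ℝ) - (a i : ℝ)))) : ℝ)) ∧
      (¬ x ≤ y → (¬ ∃ i : ι, x ∈ Set.Icc (a i) (b i) ∧ y ∈ Set.Icc (a i) (b i)) →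
        sSup {w : I | T x w ≤ y} = y)) := by
  have h : IsOrdinalSum t a b T := ⟨hab, hdisj, hdef₁, hdef₂⟩
  refine ⟨h.comm, h.assoc, fun _ _ _ _ hx hy => h.mono hx hy, h.continuous, h.one_mul, fun x y =>
    ⟨h.sSup_eq_one, fun i hxy hx hy => ?_, fun hxy => h.sSup_eq_right (not_le.1 hxy)⟩⟩
  rw [h.sSup_eq_ofUnit (not_le.1 hxy) hx hy, coe_ofUnit (hab i).le]
  rfl
end

section
/- Let X be a partially ordered compact space. Then the continuous monotone maps X → [0,1] form a point-separating and order-initial family: for all x, y ∈ X, x ≤ y holds if and only if ψ(x) ≤ ψ(y) for every continuous monotone map ψ : X → [0,1]. In particular, for x ≠ y there is a continuous monotone ψ : X → [0,1] with ψ(x) ≠ ψ(y). -/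
open unitInterval Set

/-!
Nachbin's ordered Urysohn lemma. Mathlib's Urysohn construction (`Urysohns.CU`) only needs, for
a closed `c` inside an open `u`, an open `v` with `c ⊆ v` and `closure v ⊆ u`. If `u` is a lower
set, `v` can be chosen to be a lower set as well: in a compact space with closed order, upper and
lower closures of closed sets are closed, and the tube lemma separates `lowerClosure c` from `uᶜ`
by open sets. Running the construction with all outer sets lower makes every approximation, hence
the limit, monotone. Taking `C = Iic y` and `U = (Ici x)ᶜ` separates `x` from `y` whenever
`¬ x ≤ y`.
-/

namespace Urysohns.CU

variable {X : Type*} [TopologicalSpace X] [Preorder X]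

theorem monotone_approx (c : CU fun _ u : Set X => IsLowerSet u) (n : ℕ) :
    Monotone (c.approx n) := by
  induction n generalizing c with
  | zero =>
    intro x y hxy
    change indicator c.Uᶜ 1 x ≤ indicator c.Uᶜ 1 y
    by_cases hx : x ∈ c.Uᶜ
    · simp [hx, c.P_C_U.compl hxy hx]
    · rw [indicator_of_notMem hx]
      exact indicator_nonneg (fun _ _ => zero_le_one) _
  | succ n ih => exact fun x y hxy => midpoint_le_midpoint (ih c.left hxy) (ih c.right hxy)

theorem monotone_lim (c : CU fun _ u : Set X => IsLowerSet u) : Monotone c.lim := fun _ y hxy =>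
  ciSup_mono (c.bddAbove_range_approx y) fun n => c.monotone_approx n hxy

end Urysohns.CU

section CompactOrderClosed

variable {X : Type*} [TopologicalSpace X] [Preorder X] [OrderClosedTopology X] [CompactSpace X]

theorem IsClosed.upperClosure_of_compactSpace {s : Set X} (hs : IsClosed s) :
    IsClosed (upperClosure s : Set X) := by
  have h : (upperClosure s : Set X) = Prod.snd '' ({p : X × X | p.1 ≤ p.2} ∩ s ×ˢ univ) := by
    ext x
    constructor
    · rintro ⟨a, ha, hax⟩
      exact ⟨(a, x), ⟨hax, ha, trivial⟩, rfl⟩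
    · rintro ⟨⟨a, x⟩, ⟨hax, ha, -⟩, rfl⟩
      exact ⟨a, ha, hax⟩
  rw [h]
  exact isClosedMap_snd_of_compactSpace _ (isClosed_le_prod.inter (hs.prod isClosed_univ))

theorem IsClosed.lowerClosure_of_compactSpace {s : Set X} (hs : IsClosed s) :
    IsClosed (lowerClosure s : Set X) :=
  have : CompactSpace Xᵒᵈ := ‹CompactSpace X›
  IsClosed.upperClosure_of_compactSpace (X := Xᵒᵈ) hs

theorem exists_isOpen_isLowerSet_closure_subset {c u : Set X} (hc : IsClosed c) (hu : IsOpen u)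
    (hu_lower : IsLowerSet u) (hcu : c ⊆ u) :
    ∃ v, IsOpen v ∧ IsLowerSet v ∧ c ⊆ v ∧ closure v ⊆ u := by
  have hcu' : (lowerClosure c : Set X) ⊆ u := fun a ⟨b, hb, hab⟩ => hu_lower hab (hcu hb)
  have hdisj : (lowerClosure c : Set X) ×ˢ uᶜ ⊆ {p : X × X | p.2 ≤ p.1}ᶜ :=
    fun _ ⟨ha, hb⟩ hba => hb (hu_lower hba (hcu' ha))
  obtain ⟨U, V, hUo, hVo, hcU, huV, hUV⟩ :=
    generalized_tube_lemma hc.lowerClosure_of_compactSpace.isCompact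
      hu.isClosed_compl.isCompact isClosed_le_prod'.isOpen_compl hdisj
  -- `v` is the largest lower set contained in `U`.
  refine ⟨(upperClosure Uᶜ : Set X)ᶜ, hUo.isClosed_compl.upperClosure_of_compactSpace.isOpen_compl,
    (upperClosure Uᶜ).upper.compl, fun a ha ⟨b, hb, hba⟩ => hb (hcU ⟨a, ha, hba⟩), ?_⟩
  have hvU : (upperClosure Uᶜ : Set X)ᶜ ⊆ U := fun x hx => not_not.1 fun hxU => hx ⟨x, hxU, le_rfl⟩
  have hUV' : U ⊆ Vᶜ := fun x hxU hxV => hUV (mk_mem_prod hxU hxV) le_rfl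
  exact (closure_minimal (hvU.trans hUV') hVo.isClosed_compl).trans (compl_subset_comm.1 huV)

theorem exists_continuous_monotone_one_zero {x y : X} (hxy : ¬x ≤ y) :
    ∃ ψ : X → I, Continuous ψ ∧ Monotone ψ ∧ ψ x = 1 ∧ ψ y = 0 := by
  let c : Urysohns.CU fun _ u : Set X => IsLowerSet u :=
    { C := Iic y
      U := (Ici x)ᶜ
      P_C_U := (isUpperSet_Ici x).compl
      closed_C := isClosed_Iic
      open_U := isClosed_Ici.isOpen_compl
      subset := fun _ hzy hxz => hxy (hxz.trans hzy)
      hP := fun hc hu_lower hu hcu => by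
        obtain ⟨v, hvo, hv_lower, hcv, hvu⟩ :=
          exists_isOpen_isLowerSet_closure_subset hc hu hu_lower hcu
        exact ⟨v, hvo, hcv, hvu, hv_lower, hu_lower⟩ }
  refine ⟨fun z => ⟨c.lim z, c.lim_mem_Icc z⟩, c.continuous_lim.subtype_mk _,
    fun _ _ hab => c.monotone_lim hab, ?_, ?_⟩
  · exact Subtype.ext (c.lim_of_notMem_U x fun h => h le_rfl)
  · exact Subtype.ext (c.lim_of_mem_C y le_rfl)

theorem le_iff_forall_continuous_monotone_unitInterval {x y : X} :
    x ≤ y ↔ ∀ ψ : X → I, Continuous ψ → Monotone ψ → ψ x ≤ ψ y := by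
  refine ⟨fun h ψ _ hψ => hψ h, fun h => by_contra fun hxy => ?_⟩
  obtain ⟨ψ, hψc, hψm, hx, hy⟩ := exists_continuous_monotone_one_zero hxy
  have h10 := h ψ hψc hψm
  rw [hx, hy] at h10
  exact zero_lt_one.not_ge h10

end CompactOrderClosed

/-- For a partially ordered compact space `X`, the continuous monotone maps `X → [0,1]`
form a point-separating and order-initial family. -/
theorem posComp_initial_cogenerator {X : Type*} [TopologicalSpace X] [CompactSpace X]
    [PartialOrder X] (hle : IsClosed {p : X × X | p.1 ≤ p.2}) :
    (∀ x y : X, x ≤ y ↔ ∀ ψ : X → I, Continuous ψ → Monotone ψ → ψ x ≤ ψ y) ∧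
    (∀ x y : X, x ≠ y → ∃ ψ : X → I, Continuous ψ ∧ Monotone ψ ∧ ψ x ≠ ψ y) := by
  have : OrderClosedTopology X := ⟨hle⟩
  refine ⟨fun x y => le_iff_forall_continuous_monotone_unitInterval, fun x y hne => ?_⟩
  by_contra! h
  exact hne (le_antisymm
    (le_iff_forall_continuous_monotone_unitInterval.2 fun ψ hc hm => (h ψ hc hm).le)
    (le_iff_forall_continuous_monotone_unitInterval.2 fun ψ hc hm => (h ψ hc hm).ge))
end

section
/- Assume ⊗ is either multiplication u·v or the Łukasiewicz tensor u⊙v = max(0,u+v−1) on [0,1]. Let X be a partially ordered compact space and Φ : CX → [0,1] a map satisfying (Mon), (Act) and (Ten)lax. Then Zero(Φ) = Anti(Φ). -/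
open unitInterval Set

/-- A continuous antitone (monotone of type `X → [0,1]ᵒᵖ`) map. -/
structure CMap (X : Type*) [TopologicalSpace X] [Preorder X] where
  toFun : X → I
  continuous' : Continuous toFun
  antitone' : Antitone toFun

namespace CMap

variable {X : Type*} [TopologicalSpace X] [Preorder X]

/-- The constant map `1`. -/
def one : CMap X := ⟨fun _ => 1, continuous_const, fun _ _ _ => le_rfl⟩

/-- Pointwise tensor `ψ₁ ⊗ ψ₂`. -/
def tens (T : ContinuousTNorm) (ψ₁ ψ₂ : CMap X) : CMap X where
  toFun x := T.mul (ψ₁.toFun x) (ψ₂.toFun x)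
  continuous' := T.continuous.comp (ψ₁.continuous'.prodMk ψ₂.continuous')
  antitone' := fun _ _ h => T.mono (ψ₁.antitone' h) (ψ₂.antitone' h)

/-- Pointwise action `u ⊗ ψ` of a scalar `u ∈ [0,1]`. -/
def smul (T : ContinuousTNorm) (u : I) (ψ : CMap X) : CMap X where
  toFun x := T.mul u (ψ.toFun x)
  continuous' := T.continuous.comp (continuous_const.prodMk ψ.continuous')
  antitone' := fun _ _ h => T.mono le_rfl (ψ.antitone' h)

/-- Pointwise binary supremum `ψ₁ ∨ ψ₂`. -/
noncomputable def sup (ψ₁ ψ₂ : CMap X) : CMap X where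
  toFun x := max (ψ₁.toFun x) (ψ₂.toFun x)
  continuous' := ψ₁.continuous'.max ψ₂.continuous'
  antitone' := fun _ _ h => max_le_max (ψ₁.antitone' h) (ψ₂.antitone' h)

/-- Truncated subtraction in `[0,1]`. -/
noncomputable def tsubI (a u : I) : I :=
  ⟨max ((a : ℝ) - u) 0, ⟨le_max_right _ _,
    max_le (by linarith [a.2.2, u.2.1]) zero_le_one⟩⟩

/-- Pointwise truncated subtraction `ψ ⊖ u`. -/
noncomputable def tsub (ψ : CMap X) (u : I) : CMap X where
  toFun x := tsubI (ψ.toFun x) u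
  continuous' := by
    apply Continuous.subtype_mk
    exact ((continuous_subtype_val.comp ψ.continuous').sub continuous_const).max continuous_const
  antitone' := fun a b h =>
    Subtype.mk_le_mk.mpr
      (max_le_max (sub_le_sub_right (Subtype.coe_le_coe.2 (ψ.antitone' h)) _) le_rfl)

end CMap


section Conditions

variable {X : Type*} [TopologicalSpace X] [Preorder X]

/-- `(Mon)`: `Φ` is monotone. -/
def Mon (Φ : CMap X → I) : Prop :=
  ∀ ψ₁ ψ₂ : CMap X, (∀ x, ψ₁.toFun x ≤ ψ₂.toFun x) → Φ ψ₁ ≤ Φ ψ₂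

/-- `(Act)`: `Φ(u ⊗ ψ) = u ⊗ Φ(ψ)`. -/
def Act (T : ContinuousTNorm) (Φ : CMap X → I) : Prop :=
  ∀ (u : I) (ψ : CMap X), Φ (CMap.smul T u ψ) = T.mul u (Φ ψ)

/-- `(Sup)`: `Φ(ψ₁ ∨ ψ₂) = Φ(ψ₁) ∨ Φ(ψ₂)`. -/
def SupC (Φ : CMap X → I) : Prop :=
  ∀ ψ₁ ψ₂ : CMap X, Φ (ψ₁.sup ψ₂) = max (Φ ψ₁) (Φ ψ₂)

/-- `(Ten)lax`: `Φ(ψ₁ ⊗ ψ₂) ≤ Φ(ψ₁) ⊗ Φ(ψ₂)`. -/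
def TenLax (T : ContinuousTNorm) (Φ : CMap X → I) : Prop :=
  ∀ ψ₁ ψ₂ : CMap X, Φ (CMap.tens T ψ₁ ψ₂) ≤ T.mul (Φ ψ₁) (Φ ψ₂)

/-- `(Ten)`: `Φ(ψ₁ ⊗ ψ₂) = Φ(ψ₁) ⊗ Φ(ψ₂)`. -/
def TenC (T : ContinuousTNorm) (Φ : CMap X → I) : Prop :=
  ∀ ψ₁ ψ₂ : CMap X, Φ (CMap.tens T ψ₁ ψ₂) = T.mul (Φ ψ₁) (Φ ψ₂)

/-- `(Top)`: `Φ(1) = 1`. -/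
def TopC (Φ : CMap X → I) : Prop := Φ CMap.one = 1

/-- `(Min)`: `Φ(ψ ⊖ u) = Φ(ψ) ⊖ u`. -/
noncomputable def MinC (Φ : CMap X → I) : Prop :=
  ∀ (u : I) (ψ : CMap X), Φ (ψ.tsub u) = CMap.tsubI (Φ ψ) u

/-- Condition `(A)`. -/
def CondA (Φ : CMap X → I) : Prop :=
  ∀ (x : X) (ψ : CMap X), Φ ψ = 0 → 0 < ψ.toFun x →
    ∃ ψ' : CMap X, ψ'.toFun x = 1 ∧ Φ ψ' = 0

/-- `Zero(Φ) = ⋂ {Zero ψ | Φ ψ = 0}`. -/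
def ZeroPhi (Φ : CMap X → I) : Set X := {x | ∀ ψ : CMap X, Φ ψ = 0 → ψ.toFun x = 0}

/-- `Anti(Φ)`. -/
def AntiPhi (Φ : CMap X → I) : Set X := {x | ∀ ψ : CMap X, ψ.toFun x ≤ Φ ψ}

/-- `Φ_A(ψ) = sup_{x ∈ A} ψ(x)`, with `Φ_∅ = 0`. -/
noncomputable def PhiA (A : Set X) (ψ : CMap X) : I :=
  ⟨sSup ((fun x => (ψ.toFun x : ℝ)) '' A),
   ⟨Real.sSup_nonneg (by rintro r ⟨x, _, rfl⟩; exact (ψ.toFun x).2.1),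
    Real.sSup_le (by rintro r ⟨x, _, rfl⟩; exact (ψ.toFun x).2.2) zero_le_one⟩⟩

end Conditions


namespace ContinuousTNorm

variable (T : ContinuousTNorm)

theorem one_pow (n : ℕ) : T.pow 1 n = 1 := by
  induction n with
  | zero => rfl
  | succ n ih => rw [pow, ih, T.one_mul']

theorem pow_le_pow_left {x y : I} (h : x ≤ y) (n : ℕ) : T.pow x n ≤ T.pow y n := by
  induction n with
  | zero => exact le_rfl
  | succ n ih => exact T.mono h ih

theorem mul_pow (u v : I) (n : ℕ) : T.pow (T.mul u v) n = T.mul (T.pow u n) (T.pow v n) := by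
  induction n with
  | zero => exact (T.one_mul' 1).symm
  | succ n ih =>
    simp only [pow, ih]
    rw [T.assoc, ← T.assoc v, T.comm v (T.pow u n), T.assoc, ← T.assoc u]

theorem coe_pow_of_coe_mul (hmul : ∀ u v : I, ((T.mul u v : I) : ℝ) = (u : ℝ) * (v : ℝ))
    (x : I) (n : ℕ) : ((T.pow x n : I) : ℝ) = (x : ℝ) ^ n := by
  induction n with
  | zero => rfl
  | succ n ih => rw [pow, hmul, ih, pow_succ']

end ContinuousTNorm


namespace CMap

variable {X : Type*} [TopologicalSpace X] [Preorder X]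

def tensPow (T : ContinuousTNorm) (ψ : CMap X) : ℕ → CMap X
  | 0 => one
  | n + 1 => tens T ψ (tensPow T ψ n)

theorem toFun_tensPow (T : ContinuousTNorm) (ψ : CMap X) (n : ℕ) (y : X) :
    (ψ.tensPow T n).toFun y = T.pow (ψ.toFun y) n := by
  induction n with
  | zero => rfl
  | succ n ih => exact congrArg (T.mul (ψ.toFun y)) ih

noncomputable def divClamp (ψ : CMap X) (b : I) : CMap X where
  toFun y := projIcc 0 1 zero_le_one ((ψ.toFun y : ℝ) / b)
  continuous' := continuous_projIcc.comp ((continuous_subtype_val.comp ψ.continuous').div_const _)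
  antitone' := fun _ _ h =>
    monotone_projIcc _ (div_le_div_of_nonneg_right (Subtype.coe_le_coe.2 (ψ.antitone' h)) b.2.1)

theorem mul_divClamp_le (ψ : CMap X) {b : I} (hb : 0 < b) (y : X) :
    (b : ℝ) * (ψ.divClamp b).toFun y ≤ ψ.toFun y := by
  have hb' : (0 : ℝ) < b := hb
  have hψ : (0 : ℝ) ≤ ψ.toFun y := (ψ.toFun y).2.1
  have hclamp : ((ψ.divClamp b).toFun y : ℝ) ≤ (ψ.toFun y : ℝ) / b :=
    max_le (div_nonneg hψ hb'.le) (min_le_right _ _)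
  calc (b : ℝ) * (ψ.divClamp b).toFun y ≤ b * ((ψ.toFun y : ℝ) / b) :=
        mul_le_mul_of_nonneg_left hclamp hb'.le
    _ = ψ.toFun y := mul_div_cancel₀ _ hb'.ne'

theorem divClamp_eq_one (ψ : CMap X) {b : I} {y : X} (hb : 0 < b) (hy : b ≤ ψ.toFun y) :
    (ψ.divClamp b).toFun y = 1 :=
  projIcc_of_right_le (h := zero_le_one) ((one_le_div₀ hb).2 hy)

/-- `ψ ⊖ b` vanishes where `ψ ≤ b`, and `ψ / b` is clamped to `1` elsewhere. -/
theorem tsub_le_tensPow_divClamp (T : ContinuousTNorm) (ψ : CMap X) {b : I} (hb : 0 < b)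
    (n : ℕ) (y : X) : (ψ.tsub b).toFun y ≤ ((ψ.divClamp b).tensPow T n).toFun y := by
  rw [toFun_tensPow]
  rcases le_total (ψ.toFun y) b with hψb | hbψ
  · have hzero : (ψ.tsub b).toFun y = 0 :=
      Subtype.ext (max_eq_right (sub_nonpos.2 (Subtype.coe_le_coe.2 hψb)))
    rw [hzero]
    exact nonneg'
  · rw [divClamp_eq_one ψ hb hbψ, T.one_pow]
    exact le_one'

end CMap


section Functional

variable {X : Type*} [TopologicalSpace X] [Preorder X] {T : ContinuousTNorm} {Φ : CMap X → I}

theorem antiPhi_subset_zeroPhi (Φ : CMap X → I) : AntiPhi Φ ⊆ ZeroPhi Φ :=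
  fun _ hx ψ hψ => le_antisymm (hψ ▸ hx ψ) nonneg'

theorem zeroPhi_subset_antiPhi
    (hsep : ∀ (ψ : CMap X) (x : X), Φ ψ < ψ.toFun x → ∃ ψ' : CMap X, Φ ψ' = 0 ∧ ψ'.toFun x ≠ 0) :
    ZeroPhi Φ ⊆ AntiPhi Φ := fun x hx ψ => by
  by_contra! hlt
  obtain ⟨ψ', hΦψ', hψ'x⟩ := hsep ψ x hlt
  exact hψ'x (hx ψ' hΦψ')

theorem phi_tensPow_le (hTen : TenLax T Φ) (ψ : CMap X) :
    ∀ n, Φ (ψ.tensPow T n) ≤ T.pow (Φ ψ) n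
  | 0 => le_one'
  | n + 1 => (hTen ψ (ψ.tensPow T n)).trans (T.mono le_rfl (phi_tensPow_le hTen ψ n))

theorem pow_mul_phi_tensPow_le (hMon : Mon Φ) (hAct : Act T Φ) (hTen : TenLax T Φ)
    {u : I} {φ ψ : CMap X} (h : ∀ y, T.mul u (φ.toFun y) ≤ ψ.toFun y) (n : ℕ) :
    T.mul (T.pow u n) (Φ (φ.tensPow T n)) ≤ T.pow (Φ ψ) n := by
  rw [← hAct]
  refine (hMon _ _ fun y => ?_).trans (phi_tensPow_le hTen ψ n)
  change T.mul (T.pow u n) ((φ.tensPow T n).toFun y) ≤ (ψ.tensPow T n).toFun y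
  rw [CMap.toFun_tensPow, CMap.toFun_tensPow, ← T.mul_pow]
  exact T.pow_le_pow_left (h y) n

/-- Łukasiewicz case: `(1 - Φ ψ) ⊙ ψ` is killed by `Φ` but is `ψ x - Φ ψ > 0` at `x`. -/
theorem exists_phi_eq_zero_of_lukasiewicz
    (hluk : ∀ u v : I, ((T.mul u v : I) : ℝ) = max 0 ((u : ℝ) + (v : ℝ) - 1))
    (hAct : Act T Φ) {ψ : CMap X} {x : X} (hlt : Φ ψ < ψ.toFun x) :
    ∃ ψ' : CMap X, Φ ψ' = 0 ∧ ψ'.toFun x ≠ 0 := by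
  have hlt' : ((Φ ψ : I) : ℝ) < ψ.toFun x := hlt
  refine ⟨CMap.smul T (σ (Φ ψ)) ψ, Subtype.ext ?_, fun h => ?_⟩
  · rw [hAct, hluk, coe_symm_eq]
    simp
  · have hval := congrArg Subtype.val h
    change ((T.mul (σ (Φ ψ)) (ψ.toFun x) : I) : ℝ) = 0 at hval
    rw [hluk, coe_symm_eq] at hval
    linarith [le_max_right 0 (1 - (Φ ψ : ℝ) + ψ.toFun x - 1)]

/-- Product case: for `Φ ψ < b < ψ x`, the powers of `φ = min (ψ / b) 1` satisfy
`Φ(φⁿ) ≤ (Φ ψ / b)ⁿ → 0`, and they all dominate `ψ ⊖ b`, which is positive at `x`. -/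
theorem exists_phi_eq_zero_of_product
    (hmul : ∀ u v : I, ((T.mul u v : I) : ℝ) = (u : ℝ) * (v : ℝ))
    (hMon : Mon Φ) (hAct : Act T Φ) (hTen : TenLax T Φ) {ψ : CMap X} {x : X}
    (hlt : Φ ψ < ψ.toFun x) : ∃ ψ' : CMap X, Φ ψ' = 0 ∧ ψ'.toFun x ≠ 0 := by
  obtain ⟨b, hcb, hba⟩ := exists_between hlt
  have hb : 0 < b := lt_of_le_of_lt nonneg' hcb
  have hb' : (0 : ℝ) < b := hb
  set φ := ψ.divClamp b
  have hφ : ∀ y, T.mul b (φ.toFun y) ≤ ψ.toFun y := fun y =>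
    Subtype.coe_le_coe.1 (by rw [hmul]; exact ψ.mul_divClamp_le hb y)
  have hbound : ∀ n : ℕ, ((Φ (ψ.tsub b) : I) : ℝ) ≤ ((Φ ψ : ℝ) / b) ^ n := fun n => by
    have hpow := Subtype.coe_le_coe.2 (pow_mul_phi_tensPow_le hMon hAct hTen hφ n)
    rw [hmul, T.coe_pow_of_coe_mul hmul, T.coe_pow_of_coe_mul hmul] at hpow
    rw [div_pow, le_div_iff₀ (pow_pos hb' n), mul_comm]
    exact (mul_le_mul_of_nonneg_left
      (Subtype.coe_le_coe.2 (hMon _ _ (ψ.tsub_le_tensPow_divClamp T hb n))) (by positivity)).trans hpow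
  have hlim : Filter.Tendsto (fun n : ℕ => ((Φ ψ : ℝ) / b) ^ n) Filter.atTop (nhds 0) :=
    tendsto_pow_atTop_nhds_zero_of_lt_one (div_nonneg nonneg' hb'.le) ((div_lt_one hb').2 hcb)
  refine ⟨ψ.tsub b, Subtype.ext (le_antisymm (ge_of_tendsto' hlim hbound) nonneg'), fun h => ?_⟩
  have hval := congrArg Subtype.val h
  change max ((ψ.toFun x : ℝ) - b) 0 = 0 at hval
  linarith [le_max_left ((ψ.toFun x : ℝ) - b) 0, (Subtype.coe_lt_coe.2 hba : (b : ℝ) < _)]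

end Functional


theorem zeroPhi_eq_antiPhi_general (T : ContinuousTNorm)
    (hT : (∀ u v : I, ((T.mul u v : I) : ℝ) = (u : ℝ) * (v : ℝ)) ∨
          (∀ u v : I, ((T.mul u v : I) : ℝ) = max 0 ((u : ℝ) + (v : ℝ) - 1))) {X : Type*} [TopologicalSpace X]
    [PartialOrder X]
    (Φ : CMap X → I) (hMon : Mon Φ) (hAct : Act T Φ) (hTen : TenLax T Φ) :
    ZeroPhi Φ = AntiPhi Φ := by
  refine Subset.antisymm (zeroPhi_subset_antiPhi fun ψ x hlt => ?_) (antiPhi_subset_zeroPhi Φ)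
  rcases hT with hmul | hluk
  · exact exists_phi_eq_zero_of_product hmul hMon hAct hTen hlt
  · exact exists_phi_eq_zero_of_lukasiewicz hluk hAct hlt

/-- For `⊗` multiplication or the Łukasiewicz tensor, any `Φ : CX → [0,1]` satisfying
`(Mon)`, `(Act)` and `(Ten)lax` has `Zero(Φ) = Anti(Φ)`. -/
theorem zeroPhi_eq_antiPhi (T : ContinuousTNorm)
    (hT : (∀ u v : I, ((T.mul u v : I) : ℝ) = (u : ℝ) * (v : ℝ)) ∨
          (∀ u v : I, ((T.mul u v : I) : ℝ) = max 0 ((u : ℝ) + (v : ℝ) - 1))) {X : Type*} [TopologicalSpace X] [CompactSpace X]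
    [PartialOrder X] (hle : IsClosed {p : X × X | p.1 ≤ p.2})
    (Φ : CMap X → I) (hMon : Mon Φ) (hAct : Act T Φ) (hTen : TenLax T Φ) :
    ZeroPhi Φ = AntiPhi Φ :=
  zeroPhi_eq_antiPhi_general T hT Φ hMon hAct hTen
end
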